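/- arXiv:1411.0155 — 2 statements merged into one kernel-verified Lean document; each statement's English description precedes it below -/
import Mathlib

section
/- Suppose F(·,x,a) has bounded variation along x̄ uniformly over A, let δ̄>0 satisfy η^δ̄(T) < ∞, assume (C1) and (C2), and take any δ ∈ (0,δ̄). Then for every s̄ ∈ [S,T), every x ∈ x̄(s̄) + δ𝔹 and every a ∈ A, the set-valued right limit F(s̄⁺,x,a) := lim_{s↓s̄} F(s,x,a) exists (i.e. the Kuratowski upper and lower limits of F(s,x,a) as s↓s̄ coincide); and for every t̄ ∈ (S,T], every y ∈ x̄(t̄) + δ𝔹 and every a ∈ A, the set-valued left limit F(t̄⁻,y,a) := lim_{t↑t̄} F(t,y,a) exists. -/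
open Set Metric Filter MeasureTheory Pointwise
open scoped ENNReal Topology

noncomputable section

/-- Euclidean `n`-space `ℝⁿ`. -/
abbrev En (n : ℕ) : Type := EuclideanSpace ℝ (Fin n)

/-- A partition `{t₀ = S, t₁, …, t_N = t}` of the interval `[S, t]`. -/
structure IntervalPartition (S t : ℝ) where
  N : ℕ
  pts : ℕ → ℝ
  hN : 0 < N
  first : pts 0 = S
  last : pts N = t
  mono : ∀ i, i < N → pts i < pts (i + 1)

/-- `diam(𝒯) ≤ ε` : every subinterval of the partition has length at most `ε`. -/
def IntervalPartition.diamLE {S t : ℝ} (P : IntervalPartition S t) (ε : ℝ) : Prop :=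
  ∀ i, i < P.N → P.pts (i + 1) - P.pts i ≤ ε

/-- The sum `I^δ(𝒯) = Σᵢ sup { d_H(F(tᵢ₊₁,x,a), F(tᵢ,x,a)) :
x ∈ x̄([tᵢ,tᵢ₊₁]) + δ𝔹, a ∈ A }` for a multifunction `F` along `x̄`, uniformly over `A`. -/
noncomputable def mvSum {n k : ℕ} (F : ℝ → En n → En k → Set (En n))
    (xbar : ℝ → En n) (A : Set (En k)) (δ : ℝ) {S t : ℝ} (P : IntervalPartition S t) : ℝ≥0∞ :=
  ∑ i ∈ Finset.range P.N,
    ⨆ x ∈ xbar '' Set.Icc (P.pts i) (P.pts (i + 1)) + Metric.closedBall (0 : En n) δ,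
      ⨆ a ∈ A, EMetric.hausdorffEdist (F (P.pts (i + 1)) x a) (F (P.pts i) x a)

/-- The `(δ,ε)`-perturbed cumulative variation function `η^δ_ε(t)`:
the supremum of `I^δ(𝒯)` over partitions `𝒯` of `[S,t]` with `diam(𝒯) ≤ ε`.
(For `t = S` there are no partitions and the value is `0`.) -/
noncomputable def mvEtaEps {n k : ℕ} (F : ℝ → En n → En k → Set (En n))
    (xbar : ℝ → En n) (A : Set (En k)) (δ ε : ℝ) (S t : ℝ) : ℝ≥0∞ :=
  ⨆ (P : IntervalPartition S t) (_ : P.diamLE ε), mvSum F xbar A δ P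

/-- The `δ`-perturbed cumulative variation function `η^δ(t) = lim_{ε↓0} η^δ_ε(t)`
(the limit of the decreasing-in-`ε` family equals the infimum). -/
noncomputable def mvEtaDelta {n k : ℕ} (F : ℝ → En n → En k → Set (En n))
    (xbar : ℝ → En n) (A : Set (En k)) (δ : ℝ) (S t : ℝ) : ℝ≥0∞ :=
  ⨅ (ε : ℝ) (_ : 0 < ε), mvEtaEps F xbar A δ ε S t

/-- The cumulative variation function `η(t) = lim_{δ↓0} η^δ(t)`. -/
noncomputable def mvEta {n k : ℕ} (F : ℝ → En n → En k → Set (En n))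
    (xbar : ℝ → En n) (A : Set (En k)) (S t : ℝ) : ℝ≥0∞ :=
  ⨅ (δ : ℝ) (_ : 0 < δ), mvEtaDelta F xbar A δ S t

/-- `F(·,x,a)` has bounded variation along `x̄` uniformly over `A` : `η(T) < ∞`. -/
def HasBVAlongUniformly {n k : ℕ} (F : ℝ → En n → En k → Set (En n))
    (xbar : ℝ → En n) (A : Set (En k)) (S T : ℝ) : Prop :=
  mvEta F xbar A S T < ⊤

/-- Hypothesis (C1): nonempty closed values, measurability in `t` (Castaing-type
characterization via distance functions), and uniform boundedness near `x̄`. -/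
def HypC1 {n k : ℕ} (F : ℝ → En n → En k → Set (En n))
    (xbar : ℝ → En n) (A : Set (En k)) (S T δbar : ℝ) : Prop :=
  (∀ t ∈ Set.Icc S T, ∀ x : En n, ∀ a ∈ A, (F t x a).Nonempty ∧ IsClosed (F t x a)) ∧
  (∀ x : En n, ∀ a ∈ A, ∀ v : En n,
      Measurable fun t : ℝ => EMetric.infEdist v (F t x a)) ∧
  (∃ c : ℝ, 0 < c ∧ ∀ t ∈ Set.Icc S T, ∀ x ∈ Metric.closedBall (xbar t) δbar, ∀ a ∈ A,
      F t x a ⊆ Metric.closedBall (0 : En n) c)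

/-- Hypothesis (C2): uniform continuity of `(x,a) ↦ F(t,x,a)` near `x̄`,
with a modulus of continuity `γ`. -/
def HypC2 {n k : ℕ} (F : ℝ → En n → En k → Set (En n))
    (xbar : ℝ → En n) (A : Set (En k)) (S T δbar : ℝ) : Prop :=
  ∃ γ : ℝ → ℝ, (∀ s, 0 ≤ γ s) ∧ Tendsto γ (𝓝[>] (0 : ℝ)) (𝓝 0) ∧
    ∀ t ∈ Set.Icc S T, ∀ x ∈ Metric.closedBall (xbar t) δbar,
      ∀ x' ∈ Metric.closedBall (xbar t) δbar, ∀ a ∈ A, ∀ a' ∈ A,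
        F t x a ⊆ F t x' a' + Metric.closedBall (0 : En n) (γ (‖x - x'‖ + ‖a - a'‖))

/-- The Kuratowski upper limit of a family of sets along a filter `l`. -/
def kLimsup {α : Type*} [PseudoEMetricSpace α] (l : Filter ℝ) (G : ℝ → Set α) : Set α :=
  {v | ∀ ε : ℝ≥0∞, 0 < ε → ∃ᶠ s in l, EMetric.infEdist v (G s) < ε}

/-- The Kuratowski lower limit of a family of sets along a filter `l`. -/
def kLiminf {α : Type*} [PseudoEMetricSpace α] (l : Filter ℝ) (G : ℝ → Set α) : Set α :=
  {v | Tendsto (fun s => EMetric.infEdist v (G s)) l (𝓝 0)}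

/-- The set-valued limit along `l` exists: upper and lower Kuratowski limits coincide. -/
def KLimExists {α : Type*} [PseudoEMetricSpace α] (l : Filter ℝ) (G : ℝ → Set α) : Prop :=
  kLimsup l G = kLiminf l G

/-- The set-valued right limit `F(s̄⁺, x, a) = lim_{s ↓ s̄} F(s,x,a)` (with `s ∈ (s̄,T]`). -/
def rightLim {n k : ℕ} (F : ℝ → En n → En k → Set (En n)) (T sbar : ℝ)
    (x : En n) (a : En k) : Set (En n) :=
  kLiminf (𝓝[Set.Ioc sbar T] sbar) fun s => F s x a

/-- The set-valued left limit `F(t̄⁻, x, a) = lim_{t ↑ t̄} F(t,x,a)` (with `t ∈ [S,t̄)`). -/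
def leftLim {n k : ℕ} (F : ℝ → En n → En k → Set (En n)) (S tbar : ℝ)
    (x : En n) (a : En k) : Set (En n) :=
  kLiminf (𝓝[Set.Ico S tbar] tbar) fun s => F s x a


/-!
The function `r ↦ η^δ̄(r)` is nondecreasing and, by `η^δ̄(T) < ∞`, finite. Appending a fine
partition of `[p, q]` to one of `[S, p]` shows that along the tube around `x̄`,
`d_H(F(q,x,a), F(p,x,a)) ≤ η^δ̄(q) - η^δ̄(p)`. Since a monotone function has one-sided limits,
`s ↦ F(s,x,a)` is Cauchy for the Hausdorff distance as `s ↓ s̄` or `t ↑ t̄`, and a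
Hausdorff-Cauchy family of sets has a Kuratowski limit.
-/

theorem Metric.hausdorffEDist_le_sum_range {α : Type*} [PseudoEMetricSpace α] (g : ℕ → Set α) :
    ∀ N : ℕ, hausdorffEDist (g N) (g 0) ≤
      ∑ i ∈ Finset.range N, hausdorffEDist (g (i + 1)) (g i)
  | 0 => by simp [hausdorffEDist_self]
  | N + 1 => by
    rw [Finset.sum_range_succ]
    exact hausdorffEDist_triangle.trans
      ((add_le_add le_rfl (hausdorffEDist_le_sum_range g N)).trans_eq (add_comm _ _))

theorem eventually_dist_le_of_continuousWithinAt {α E : Type*} [TopologicalSpace α]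
    [PseudoMetricSpace E] {f : α → E} {s : Set α} {t₀ : α} (hf : ContinuousWithinAt f s t₀)
    {x : E} {δ δ' : ℝ} (hx : dist x (f t₀) ≤ δ) (hδ : δ < δ') :
    ∀ᶠ r in 𝓝[s] t₀, dist x (f r) ≤ δ' := by
  filter_upwards [hf (ball_mem_nhds _ (sub_pos.2 hδ))] with r hr
  rw [mem_preimage, mem_ball, dist_comm] at hr
  linarith [dist_triangle x (f t₀) (f r)]

namespace IntervalPartition

variable {S s t ε : ℝ}

theorem pts_le_pts (P : IntervalPartition S t) {i j : ℕ} (hij : i ≤ j) (hj : j ≤ P.N) :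
    P.pts i ≤ P.pts j := by
  induction j, hij using Nat.le_induction with
  | base => exact le_rfl
  | succ j _ ih => exact (ih (by omega)).trans (P.mono j (by omega)).le

theorem pts_mem_Icc (P : IntervalPartition S t) {i : ℕ} (hi : i ≤ P.N) : P.pts i ∈ Icc S t :=
  ⟨P.first.symm.trans_le (P.pts_le_pts (Nat.zero_le i) hi),
    (P.pts_le_pts hi le_rfl).trans_eq P.last⟩

def uniform (hst : s < t) (M : ℕ) (hM : 0 < M) : IntervalPartition s t where
  N := M
  pts i := s + i * ((t - s) / M)
  hN := hM
  first := by simp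
  last := by
    have : (M : ℝ) ≠ 0 := Nat.cast_ne_zero.2 hM.ne'
    field_simp
    ring
  mono i _ := by
    have := div_pos (sub_pos.2 hst) (Nat.cast_pos.2 hM)
    push_cast
    linarith

theorem exists_diamLE (hst : s < t) (hε : 0 < ε) : ∃ P : IntervalPartition s t, P.diamLE ε := by
  obtain ⟨M, hM⟩ := exists_nat_gt ((t - s) / ε)
  have hM₀ : (0 : ℝ) < M := (div_pos (sub_pos.2 hst) hε).trans hM
  refine ⟨uniform hst M (Nat.cast_pos.1 hM₀), fun i _ => ?_⟩
  have : (t - s) / M ≤ ε := by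
    rw [div_lt_iff₀ hε] at hM
    rw [div_le_iff₀ hM₀]
    linarith
  simp only [uniform]
  push_cast
  linarith

def appendPts (P : IntervalPartition S s) (Q : IntervalPartition s t) (i : ℕ) : ℝ :=
  if i < P.N then P.pts i else Q.pts (i - P.N)

theorem appendPts_of_le (P : IntervalPartition S s) (Q : IntervalPartition s t) {i : ℕ}
    (hi : i ≤ P.N) : appendPts P Q i = P.pts i := by
  rcases hi.lt_or_eq with hi | rfl
  · exact if_pos hi
  · simp [appendPts, P.last, Q.first]

theorem appendPts_add (P : IntervalPartition S s) (Q : IntervalPartition s t) (j : ℕ) :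
    appendPts P Q (P.N + j) = Q.pts j := by
  simp [appendPts]

def append (P : IntervalPartition S s) (Q : IntervalPartition s t) : IntervalPartition S t where
  N := P.N + Q.N
  pts := appendPts P Q
  hN := Nat.add_pos_left P.hN _
  first := by rw [appendPts_of_le P Q (Nat.zero_le _), P.first]
  last := by rw [appendPts_add, Q.last]
  mono i hi := by
    rcases lt_or_ge i P.N with h | h
    · rw [appendPts_of_le P Q h.le, appendPts_of_le P Q h]
      exact P.mono i h
    · obtain ⟨j, rfl⟩ := Nat.exists_eq_add_of_le h
      rw [add_assoc, appendPts_add, appendPts_add]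
      exact Q.mono j (by omega)

theorem diamLE.append {P : IntervalPartition S s} {Q : IntervalPartition s t} (hP : P.diamLE ε)
    (hQ : Q.diamLE ε) : (P.append Q).diamLE ε := by
  intro i hi
  show appendPts P Q (i + 1) - appendPts P Q i ≤ ε
  rcases lt_or_ge i P.N with h | h
  · rw [appendPts_of_le P Q h.le, appendPts_of_le P Q h]
    exact hP i h
  · obtain ⟨j, rfl⟩ := Nat.exists_eq_add_of_le h
    rw [add_assoc, appendPts_add, appendPts_add]
    exact hQ j (by change P.N + j < P.N + Q.N at hi; omega)

end IntervalPartition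

open IntervalPartition

section Variation

variable {n k : ℕ} {F : ℝ → En n → En k → Set (En n)} {xbar : ℝ → En n} {A : Set (En k)}
  {δ ε S s t : ℝ} {x : En n} {a : En k}

theorem mvSum_append (P : IntervalPartition S s) (Q : IntervalPartition s t) :
    mvSum F xbar A δ (P.append Q) = mvSum F xbar A δ P + mvSum F xbar A δ Q := by
  simp only [mvSum, append]
  rw [Finset.sum_range_add]
  congr 1
  · refine Finset.sum_congr rfl fun i hi => ?_
    rw [Finset.mem_range] at hi
    rw [appendPts_of_le P Q hi.le, appendPts_of_le P Q hi]
  · refine Finset.sum_congr rfl fun j _ => ?_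
    rw [add_assoc, appendPts_add, appendPts_add]

/-- Over each subinterval `[tᵢ, tᵢ₊₁]` the point `x` itself is admissible in the supremum, since
it lies within `δ` of `x̄(tᵢ)`. -/
theorem hausdorffEDist_le_mvSum (Q : IntervalPartition s t) (ha : a ∈ A)
    (htube : ∀ r ∈ Icc s t, dist x (xbar r) ≤ δ) :
    hausdorffEDist (F t x a) (F s x a) ≤ mvSum F xbar A δ Q := by
  have hchain := hausdorffEDist_le_sum_range (fun i => F (Q.pts i) x a) Q.N
  rw [Q.first, Q.last] at hchain
  refine hchain.trans (Finset.sum_le_sum fun i hi => ?_)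
  have hi := Finset.mem_range.1 hi
  have hx : x ∈ xbar '' Icc (Q.pts i) (Q.pts (i + 1)) + closedBall (0 : En n) δ :=
    mem_add.2 ⟨xbar (Q.pts i), mem_image_of_mem _ ⟨le_rfl, (Q.mono i hi).le⟩, x - xbar (Q.pts i),
      by simpa [dist_eq_norm] using htube _ (Q.pts_mem_Icc hi.le), by abel⟩
  exact le_iSup₂_of_le x hx (le_iSup₂_of_le a ha le_rfl)

theorem mvSum_le_mvEtaEps {P : IntervalPartition S t} (hP : P.diamLE ε) :
    mvSum F xbar A δ P ≤ mvEtaEps F xbar A δ ε S t :=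
  le_iSup₂ (f := fun (P : IntervalPartition S t) (_ : P.diamLE ε) => mvSum F xbar A δ P) P hP

theorem mvEtaEps_mono (hε : 0 < ε) (hst : s ≤ t) :
    mvEtaEps F xbar A δ ε S s ≤ mvEtaEps F xbar A δ ε S t := by
  rcases hst.eq_or_lt with rfl | hst
  · exact le_rfl
  obtain ⟨Q, hQ⟩ := exists_diamLE hst hε
  refine iSup₂_le fun P hP => ?_
  calc mvSum F xbar A δ P ≤ mvSum F xbar A δ P + mvSum F xbar A δ Q := le_self_add
    _ = mvSum F xbar A δ (P.append Q) := (mvSum_append P Q).symm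
    _ ≤ mvEtaEps F xbar A δ ε S t := mvSum_le_mvEtaEps (hP.append hQ)

theorem hausdorffEDist_add_mvEtaEps_le (hε : 0 < ε) (hSs : S < s) (hst : s < t) (ha : a ∈ A)
    (htube : ∀ r ∈ Icc s t, dist x (xbar r) ≤ δ) :
    hausdorffEDist (F t x a) (F s x a) + mvEtaEps F xbar A δ ε S s ≤
      mvEtaEps F xbar A δ ε S t := by
  obtain ⟨Q, hQ⟩ := exists_diamLE hst hε
  rw [mvEtaEps, ENNReal.add_biSup' (exists_diamLE hSs hε)]
  refine iSup₂_le fun P hP => ?_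
  calc hausdorffEDist (F t x a) (F s x a) + mvSum F xbar A δ P
      ≤ mvSum F xbar A δ Q + mvSum F xbar A δ P :=
        add_le_add (hausdorffEDist_le_mvSum Q ha htube) le_rfl
    _ = mvSum F xbar A δ (P.append Q) := by rw [mvSum_append, add_comm]
    _ ≤ mvEtaEps F xbar A δ ε S t := mvSum_le_mvEtaEps (hP.append hQ)

theorem mvEtaDelta_monotone : Monotone (mvEtaDelta F xbar A δ S) :=
  fun _ _ hst => le_iInf₂ fun ε hε => iInf₂_le_of_le ε hε (mvEtaEps_mono hε hst)

theorem hausdorffEDist_le_mvEtaDelta_sub (hSs : S < s) (hst : s ≤ t)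
    (hs : mvEtaDelta F xbar A δ S s ≠ ⊤) (ha : a ∈ A)
    (htube : ∀ r ∈ Icc s t, dist x (xbar r) ≤ δ) :
    hausdorffEDist (F t x a) (F s x a) ≤
      mvEtaDelta F xbar A δ S t - mvEtaDelta F xbar A δ S s := by
  rcases hst.eq_or_lt with rfl | hst
  · simp [hausdorffEDist_self]
  refine ENNReal.le_sub_of_add_le_right hs (le_iInf₂ fun ε hε => ?_)
  exact (add_le_add le_rfl (iInf₂_le ε hε)).trans
    (hausdorffEDist_add_mvEtaEps_le hε hSs hst ha htube)

end Variation

theorem kLimExists_of_tendsto_hausdorffEDist {α : Type*} [PseudoEMetricSpace α] {l : Filter ℝ}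
    [l.NeBot] {G : ℝ → Set α}
    (h : Tendsto (fun p : ℝ × ℝ => hausdorffEDist (G p.1) (G p.2)) (l ×ˢ l) (𝓝 0)) :
    KLimExists l G := by
  refine Subset.antisymm (fun v hv => ?_) fun v hv ε hε => (hv.eventually_lt_const hε).frequently
  refine ENNReal.tendsto_nhds_zero.2 fun ε hε => ?_
  have hε₂ : 0 < ε / 2 := ENNReal.half_pos hε.ne'
  obtain ⟨U, hU, hUG⟩ := tendsto_prod_self_iff.1 h (Iio (ε / 2)) (Iio_mem_nhds hε₂)
  obtain ⟨s₀, hs₀, hs₀U⟩ := ((hv (ε / 2) hε₂).and_eventually hU).exists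
  filter_upwards [hU] with t ht
  calc infEDist v (G t)
      ≤ infEDist v (G s₀) + hausdorffEDist (G s₀) (G t) :=
        infEDist_le_infEDist_add_hausdorffEDist
    _ ≤ ε / 2 + ε / 2 := add_le_add hs₀.le (hUG s₀ t hs₀U ht).le
    _ = ε := ENNReal.add_halves ε

section OneSidedLimits

variable {n k : ℕ} {F : ℝ → En n → En k → Set (En n)} {xbar : ℝ → En n} {A : Set (En k)}
  {S T δ δbar : ℝ} {x : En n} {a : En k}

theorem kLimExists_of_tendsto_mvEtaDelta {l : Filter ℝ} [l.NeBot] {L : ℝ≥0∞} (hL : L ≠ ⊤)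
    (hη : Tendsto (mvEtaDelta F xbar A δ S) l (𝓝 L)) {U : Set ℝ} (hU : U ∈ l)
    (hUc : U.OrdConnected) (hUS : U ⊆ Ioi S) (ha : a ∈ A)
    (htube : ∀ r ∈ U, dist x (xbar r) ≤ δ) :
    KLimExists l fun s => F s x a := by
  set η := mvEtaDelta F xbar A δ S
  have hdiff : Tendsto (fun p : ℝ × ℝ => max (η p.2 - η p.1) (η p.1 - η p.2)) (l ×ˢ l) (𝓝 0) := by
    have h₁ : Tendsto (fun p : ℝ × ℝ => η p.1) (l ×ˢ l) (𝓝 L) := hη.comp tendsto_fst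
    have h₂ : Tendsto (fun p : ℝ × ℝ => η p.2) (l ×ˢ l) (𝓝 L) := hη.comp tendsto_snd
    simpa using (ENNReal.Tendsto.sub h₂ h₁ (Or.inl hL)).max (ENNReal.Tendsto.sub h₁ h₂ (Or.inl hL))
  have key : ∀ {p q}, p ∈ U → q ∈ U → η p ≠ ⊤ → p ≤ q →
      hausdorffEDist (F q x a) (F p x a) ≤ η q - η p := fun hp hq hpη hpq =>
    hausdorffEDist_le_mvEtaDelta_sub (hUS hp) hpq hpη ha fun r hr => htube r (hUc.out hp hq hr)
  have hfin : ∀ᶠ r in l, r ∈ U ∧ η r ≠ ⊤ := inter_mem hU (hη.eventually_ne hL)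
  apply kLimExists_of_tendsto_hausdorffEDist
  refine tendsto_of_tendsto_of_tendsto_of_le_of_le' tendsto_const_nhds hdiff
    (Eventually.of_forall fun _ => zero_le) ?_
  filter_upwards [prod_mem_prod hfin hfin]
  rintro ⟨p, q⟩ ⟨⟨hpU, hp⟩, hqU, hq⟩
  rcases le_total p q with hpq | hqp
  · rw [hausdorffEDist_comm]
    exact (key hpU hqU hp hpq).trans (le_max_left _ _)
  · exact (key hqU hpU hq hqp).trans (le_max_right _ _)

theorem kLimExists_nhdsWithin_Ioc (hx : ContinuousOn xbar (Icc S T))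
    (hfin : mvEtaDelta F xbar A δbar S T < ⊤) (hδ : δ < δbar) {sbar : ℝ} (hs : sbar ∈ Ico S T)
    (hxs : x ∈ closedBall (xbar sbar) δ) (ha : a ∈ A) :
    KLimExists (𝓝[Ioc sbar T] sbar) fun s => F s x a := by
  obtain ⟨hSs, hsT⟩ := hs
  have hη : Monotone (mvEtaDelta F xbar A δbar S) := mvEtaDelta_monotone
  have htube : ∀ᶠ r in 𝓝[Ioc sbar T] sbar, dist x (xbar r) ≤ δbar :=
    nhdsWithin_mono _ (Ioc_subset_Icc_self.trans (Icc_subset_Icc_left hSs))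
      (eventually_dist_le_of_continuousWithinAt (hx sbar ⟨hSs, hsT.le⟩) hxs hδ)
  rw [nhdsWithin_Ioc_eq_nhdsGT hsT] at htube ⊢
  obtain ⟨u, hu, hsub⟩ := mem_nhdsGT_iff_exists_Ioo_subset.1 htube
  have hL : sInf (mvEtaDelta F xbar A δbar S '' Ioi sbar) ≠ ⊤ :=
    ne_top_of_le_ne_top hfin.ne (sInf_le (mem_image_of_mem _ hsT))
  exact kLimExists_of_tendsto_mvEtaDelta hL (hη.tendsto_nhdsGT sbar) (Ioo_mem_nhdsGT hu)
    ordConnected_Ioo (fun r hr => hSs.trans_lt hr.1) ha hsub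

theorem kLimExists_nhdsWithin_Ico (hx : ContinuousOn xbar (Icc S T))
    (hfin : mvEtaDelta F xbar A δbar S T < ⊤) (hδ : δ < δbar) {tbar : ℝ} (ht : tbar ∈ Ioc S T)
    (hxt : x ∈ closedBall (xbar tbar) δ) (ha : a ∈ A) :
    KLimExists (𝓝[Ico S tbar] tbar) fun t => F t x a := by
  obtain ⟨hSt, htT⟩ := ht
  have hη : Monotone (mvEtaDelta F xbar A δbar S) := mvEtaDelta_monotone
  have htube : ∀ᶠ r in 𝓝[Ico S tbar] tbar, dist x (xbar r) ≤ δbar :=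
    nhdsWithin_mono _ (Ico_subset_Icc_self.trans (Icc_subset_Icc_right htT))
      (eventually_dist_le_of_continuousWithinAt (hx tbar ⟨hSt.le, htT⟩) hxt hδ)
  rw [nhdsWithin_Ico_eq_nhdsLT hSt] at htube ⊢
  obtain ⟨u, hu, hsub⟩ :=
    mem_nhdsLT_iff_exists_Ioo_subset.1 (inter_mem (Ioo_mem_nhdsLT hSt) htube)
  have hL : sSup (mvEtaDelta F xbar A δbar S '' Iio tbar) ≠ ⊤ :=
    ne_top_of_le_ne_top hfin.ne (sSup_le (forall_mem_image.2 fun r hr => hη (hr.le.trans htT)))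
  exact kLimExists_of_tendsto_mvEtaDelta hL (hη.tendsto_nhdsLT tbar) (Ioo_mem_nhdsLT hu)
    ordConnected_Ioo (fun r hr => (hsub hr).1.1) ha fun r hr => (hsub hr).2

end OneSidedLimits

theorem statement1_general {n k : ℕ} (F : ℝ → En n → En k → Set (En n))
    (xbar : ℝ → En n) (A : Set (En k)) (S T : ℝ)
    (hx : ContinuousOn xbar (Set.Icc S T))
    (δbar : ℝ) (hfin : mvEtaDelta F xbar A δbar S T < ⊤)
    (δ : ℝ) (hδ : δ ∈ Set.Ioo 0 δbar) :
    (∀ sbar ∈ Set.Ico S T, ∀ x ∈ Metric.closedBall (xbar sbar) δ, ∀ a ∈ A,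
        KLimExists (𝓝[Set.Ioc sbar T] sbar) fun s => F s x a) ∧
    (∀ tbar ∈ Set.Ioc S T, ∀ y ∈ Metric.closedBall (xbar tbar) δ, ∀ a ∈ A,
        KLimExists (𝓝[Set.Ico S tbar] tbar) fun t => F t y a) :=
  ⟨fun _ hs _ hxs _ ha => kLimExists_nhdsWithin_Ioc hx hfin hδ.2 hs hxs ha,
    fun _ ht _ hyt _ ha => kLimExists_nhdsWithin_Ico hx hfin hδ.2 ht hyt ha⟩

/-- Under bounded variation along `x̄` uniformly over `A`,
`η^δ̄(T) < ∞`, (C1) and (C2), for every `δ ∈ (0,δ̄)` the set-valued one-sided limits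
`F(s̄⁺,x,a)` (for `s̄ ∈ [S,T)`, `x ∈ x̄(s̄)+δ𝔹`, `a ∈ A`) and `F(t̄⁻,y,a)`
(for `t̄ ∈ (S,T]`, `y ∈ x̄(t̄)+δ𝔹`, `a ∈ A`) exist: the Kuratowski upper and
lower limits coincide. -/
theorem statement1 {n k : ℕ} (F : ℝ → En n → En k → Set (En n))
    (xbar : ℝ → En n) (A : Set (En k)) (S T : ℝ) (hST : S < T)
    (hA : IsCompact A) (hx : ContinuousOn xbar (Set.Icc S T))
    (hBV : HasBVAlongUniformly F xbar A S T)
    (δbar : ℝ) (hδbar : 0 < δbar) (hfin : mvEtaDelta F xbar A δbar S T < ⊤)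
    (hC1 : HypC1 F xbar A S T δbar) (hC2 : HypC2 F xbar A S T δbar)
    (δ : ℝ) (hδ : δ ∈ Set.Ioo 0 δbar) :
    (∀ sbar ∈ Set.Ico S T, ∀ x ∈ Metric.closedBall (xbar sbar) δ, ∀ a ∈ A,
        KLimExists (𝓝[Set.Ioc sbar T] sbar) fun s => F s x a) ∧
    (∀ tbar ∈ Set.Ioc S T, ∀ y ∈ Metric.closedBall (xbar tbar) δ, ∀ a ∈ A,
        KLimExists (𝓝[Set.Ico S tbar] tbar) fun t => F t y a) :=
  statement1_general F xbar A S T hx δbar hfin δ hδ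

end
end

section
/- Let f(t,x) = t·x on [0,1] × ℝ and x̄(t) = t on [0,1]. Then: (i) the simple cumulative variation function η_simple(t) := sup{ Σ_{i=0}^{N−1} sup_{x∈[0,1]} |f(t_{i+1},x) − f(t_i,x)| : {t_i} a partition of [0,t] } equals t for all t ∈ [0,1]; (ii) the cumulative variation function η of f(·,x) along x̄ equals t²/2 for all t ∈ [0,1]; and consequently, for every nontrivial subinterval [s,t] ⊂ [0,1] with s < t, (η_simple(t) − η_simple(s)) − (η(t) − η(s)) = (t−s)(1 − (t+s)/2) > 0. -/
open Set Metric Filter MeasureTheory Pointwise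
open scoped ENNReal Topology

noncomputable section

/-- A partition `{t₀ = S, t₁, …, t_N = t}` of the interval `[S, t]`. -/
structure TPartition (S t : ℝ) where
  N : ℕ
  pts : ℕ → ℝ
  hN : 0 < N
  first : pts 0 = S
  last : pts N = t
  mono : ∀ i, i < N → pts i < pts (i + 1)

/-- `diam(𝒯) ≤ ε` : every subinterval of the partition has length at most `ε`. -/
def TPartition.diamLE {S t : ℝ} (P : TPartition S t) (ε : ℝ) : Prop :=
  ∀ i, i < P.N → P.pts (i + 1) - P.pts i ≤ ε

/-- The sum `I^δ(𝒯) = Σᵢ sup { |m(tᵢ₊₁,x) − m(tᵢ,x)| : x ∈ x̄([tᵢ,tᵢ₊₁]) + δ𝔹 }`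
for a function `m` along `x̄` (distances measured by `edist` in the target). -/
noncomputable def fSum {E α : Type*} [NormedAddCommGroup E] [PseudoEMetricSpace α]
    (m : ℝ → E → α) (xbar : ℝ → E) (δ : ℝ) {S t : ℝ} (P : TPartition S t) : ℝ≥0∞ :=
  ∑ i ∈ Finset.range P.N,
    ⨆ x ∈ xbar '' Set.Icc (P.pts i) (P.pts (i + 1)) + Metric.closedBall (0 : E) δ,
      edist (m (P.pts (i + 1)) x) (m (P.pts i) x)

/-- The `(δ,ε)`-perturbed cumulative variation function `η^δ_ε(t)` of `m(·,x)` along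
`x̄`: the supremum of `I^δ(𝒯)` over partitions `𝒯` of `[S,t]` with `diam(𝒯) ≤ ε`. -/
noncomputable def fEtaEps {E α : Type*} [NormedAddCommGroup E] [PseudoEMetricSpace α]
    (m : ℝ → E → α) (xbar : ℝ → E) (δ ε : ℝ) (S t : ℝ) : ℝ≥0∞ :=
  ⨆ (P : TPartition S t) (_ : P.diamLE ε), fSum m xbar δ P

/-- The `δ`-perturbed cumulative variation function `η^δ(t) = lim_{ε↓0} η^δ_ε(t)`. -/
noncomputable def fEtaDelta {E α : Type*} [NormedAddCommGroup E] [PseudoEMetricSpace α]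
    (m : ℝ → E → α) (xbar : ℝ → E) (δ : ℝ) (S t : ℝ) : ℝ≥0∞ :=
  ⨅ (ε : ℝ) (_ : 0 < ε), fEtaEps m xbar δ ε S t

/-- The cumulative variation function `η(t) = lim_{δ↓0} η^δ(t)` of `m(·,x)` along `x̄`. -/
noncomputable def fEta {E α : Type*} [NormedAddCommGroup E] [PseudoEMetricSpace α]
    (m : ℝ → E → α) (xbar : ℝ → E) (S t : ℝ) : ℝ≥0∞ :=
  ⨅ (δ : ℝ) (_ : 0 < δ), fEtaDelta m xbar δ S t

/-- `m(·,x)` has bounded variation along `x̄` on `[S,T]` : `η(T) < ∞`. -/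
def FunHasBVAlong {E α : Type*} [NormedAddCommGroup E] [PseudoEMetricSpace α]
    (m : ℝ → E → α) (xbar : ℝ → E) (S T : ℝ) : Prop :=
  fEta m xbar S T < ⊤

/-- Hypothesis (BV1): `x̄` is continuous and, for some `δ' > 0`, `m(t,·)` is
continuously differentiable on the interior of `x̄(t) + δ'𝔹` for all `t ∈ [S,T]`. -/
def HypBV1 {n r : ℕ} (m : ℝ → En n → En r) (xbar : ℝ → En n) (S T δ' : ℝ) : Prop :=
  ContinuousOn xbar (Set.Icc S T) ∧ 0 < δ' ∧
    ∀ t ∈ Set.Icc S T, ContDiffOn ℝ 1 (m t) (Metric.ball (xbar t) δ')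

/-- Hypothesis (BV2): both `m(·,x)` and `∇ₓm(·,x)` have bounded variation along `x̄`. -/
def HypBV2 {n r : ℕ} (m : ℝ → En n → En r) (xbar : ℝ → En n) (S T : ℝ) : Prop :=
  FunHasBVAlong m xbar S T ∧
    FunHasBVAlong (fun t x => fderiv ℝ (m t) x) xbar S T

/-- The pairing `∫ g·dμʲ = Σᵢ ⟨g(tᵢ), m(tᵢ₊₁,ξᵢ) − m(tᵢ,ξᵢ)⟩` of a continuous function
`g` with the discrete `ℝʳ`-valued measure `μʲ = Σᵢ [m(tᵢ₊₁,ξᵢ) − m(tᵢ,ξᵢ)] δ_{tᵢ}`. -/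
noncomputable def discretePairing {n r : ℕ} (m : ℝ → En n → En r) {S T : ℝ}
    (P : TPartition S T) (ξ : ℕ → En n) (g : ℝ → En r) : ℝ :=
  ∑ i ∈ Finset.range P.N, ∑ l : Fin r,
    g (P.pts i) l * (m (P.pts (i + 1)) (ξ i) l - m (P.pts i) (ξ i) l)

/-- The integral `∫ f dμ` of a real function against a signed Borel measure,
via the Jordan decomposition. -/
noncomputable def signedIntegral (μ : MeasureTheory.SignedMeasure ℝ) (f : ℝ → ℝ) : ℝ :=
  (∫ t, f t ∂μ.toJordanDecomposition.posPart) -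
    ∫ t, f t ∂μ.toJordanDecomposition.negPart

/-- The pairing `∫ g·dμ = Σ_l ∫ g_l dμ_l` of a continuous function with an
`ℝʳ`-valued Borel measure `μ` (given through its `r` signed components). -/
noncomputable def signedPairing {r : ℕ} (μ : Fin r → MeasureTheory.SignedMeasure ℝ)
    (g : ℝ → En r) : ℝ :=
  ∑ l : Fin r, signedIntegral (μ l) fun t => g t l

/-- `μ` (an `ℝʳ`-valued Borel measure on `[S,T]`, given through its signed components)
is the partial variation measure `B ↦ ∫_B d_t m(t,x̄(t))` of `m(·,x)` along `x̄`:
it is supported on `[S,T]` and is the weak* limit of the discrete measures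
`μʲ = Σᵢ [m(tʲᵢ₊₁,ξʲᵢ) − m(tʲᵢ,ξʲᵢ)] δ_{tʲᵢ}`, for every sequence of partitions of
`[S,T]` with diameters tending to `0` and points `ξʲᵢ = x̄(t)`, `t ∈ [tʲᵢ,tʲᵢ₊₁]`. -/
def IsPartialVariationMeasure {n r : ℕ} (m : ℝ → En n → En r) (xbar : ℝ → En n)
    (S T : ℝ) (μ : Fin r → MeasureTheory.SignedMeasure ℝ) : Prop :=
  (∀ l, (μ l).restrict (Set.Icc S T)ᶜ = 0) ∧
  ∀ (P : ℕ → TPartition S T) (ξ : ℕ → ℕ → En n),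
    (∀ ε : ℝ, 0 < ε → ∃ J : ℕ, ∀ j ≥ J, (P j).diamLE ε) →
    (∀ j i, i < (P j).N →
      ∃ t ∈ Set.Icc ((P j).pts i) ((P j).pts (i + 1)), ξ j i = xbar t) →
    ∀ g : ℝ → En r, Continuous g →
      Tendsto (fun j => discretePairing m (P j) (ξ j) g) atTop (𝓝 (signedPairing μ g))


/-- The simple cumulative variation function of `f(t,x) = t·x` with `X = [0,1]`:
`η_simple(t) = sup { Σᵢ sup_{x∈[0,1]} |f(tᵢ₊₁,x) − f(tᵢ,x)| : {tᵢ} a partition of [0,t] }`. -/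
noncomputable def etaSimple (t : ℝ) : ℝ≥0∞ :=
  ⨆ P : TPartition 0 t, ∑ i ∈ Finset.range P.N,
    ⨆ x ∈ Set.Icc (0 : ℝ) 1, edist (P.pts (i + 1) * x) (P.pts i * x)

/-!
Along `x̄(t) = t`, the localized supremum of `|(tᵢ₊₁ - tᵢ) x|` over `x ∈ [tᵢ - δ, tᵢ₊₁ + δ]`
is `(tᵢ₊₁ - tᵢ)(tᵢ₊₁ + δ)`, so `I^δ(𝒯)` is a right Riemann sum of `x ↦ x + δ`. Comparing with
the telescoping increments of `x²/2 + δx`, on `[S, t]` it lies between `(t² - S²)/2 + δ(t - S)`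
and that value plus `ε(t - S)/2` when `diam 𝒯 ≤ ε`; letting `ε` and then `δ` tend to `0` gives
`η(t) = t²/2`. Without localization the supremum over `x ∈ [0,1]` is `tᵢ₊₁ - tᵢ`, so
`η_simple(t)` telescopes to `t`.
-/

namespace TPartition

variable {S t : ℝ} (P : TPartition S t)

lemma pts_mono {i j : ℕ} (hij : i ≤ j) (hj : j ≤ P.N) : P.pts i ≤ P.pts j := by
  induction j, hij using Nat.le_induction with
  | base => exact le_rfl
  | succ k _ ih => exact (ih (by omega)).trans (P.mono k (by omega)).le

lemma left_le_pts {i : ℕ} (hi : i ≤ P.N) : S ≤ P.pts i := by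
  simpa [P.first] using P.pts_mono (Nat.zero_le i) hi

lemma left_lt_right (P : TPartition S t) : S < t :=
  calc S = P.pts 0 := P.first.symm
    _ < P.pts 1 := P.mono 0 P.hN
    _ ≤ P.pts P.N := P.pts_mono P.hN le_rfl
    _ = t := P.last

instance : IsEmpty (TPartition S S) := ⟨fun P => P.left_lt_right.false⟩

lemma sum_range_sub_comp (F : ℝ → ℝ) :
    ∑ i ∈ Finset.range P.N, (F (P.pts (i + 1)) - F (P.pts i)) = F t - F S := by
  rw [Finset.sum_range_sub (fun i => F (P.pts i)), P.last, P.first]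

lemma sub_le_sum {F : ℝ → ℝ} {g : ℕ → ℝ}
    (h : ∀ i < P.N, F (P.pts (i + 1)) - F (P.pts i) ≤ g i) :
    F t - F S ≤ ∑ i ∈ Finset.range P.N, g i := by
  rw [← P.sum_range_sub_comp F]
  exact Finset.sum_le_sum fun i hi => h i (Finset.mem_range.1 hi)

lemma sum_le_sub {F : ℝ → ℝ} {g : ℕ → ℝ}
    (h : ∀ i < P.N, g i ≤ F (P.pts (i + 1)) - F (P.pts i)) :
    ∑ i ∈ Finset.range P.N, g i ≤ F t - F S := by
  rw [← P.sum_range_sub_comp F]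
  exact Finset.sum_le_sum fun i hi => h i (Finset.mem_range.1 hi)

def uniform (hSt : S < t) (N : ℕ) (hN : 0 < N) : TPartition S t where
  N := N
  pts i := S + i * ((t - S) / N)
  hN := hN
  first := by simp
  last := by field_simp; ring
  mono i _ := by
    have : 0 < (t - S) / N := by positivity
    push_cast
    linarith

lemma uniform_diamLE (hSt : S < t) (N : ℕ) (hN : 0 < N) :
    (uniform hSt N hN).diamLE ((t - S) / N) := by
  intro i _
  simp only [uniform]
  push_cast
  linarith

lemma exists_diamLE {ε : ℝ} (hSt : S < t) (hε : 0 < ε) : ∃ P : TPartition S t, P.diamLE ε := by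
  have hN : 0 < ⌈(t - S) / ε⌉₊ := Nat.ceil_pos.2 (div_pos (sub_pos.2 hSt) hε)
  refine ⟨uniform hSt _ hN, fun i hi => (uniform_diamLE hSt _ hN i hi).trans ?_⟩
  rw [div_le_iff₀ (by positivity), mul_comm, ← div_le_iff₀ hε]
  exact Nat.le_ceil _

lemma le_sum_sub_mul_add (δ : ℝ) :
    (t ^ 2 - S ^ 2) / 2 + (t - S) * δ ≤
      ∑ i ∈ Finset.range P.N, (P.pts (i + 1) - P.pts i) * (P.pts (i + 1) + δ) := by
  have h := P.sub_le_sum (F := fun x => x ^ 2 / 2 + δ * x)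
    (g := fun i => (P.pts (i + 1) - P.pts i) * (P.pts (i + 1) + δ))
    fun i _ => by nlinarith [sq_nonneg (P.pts (i + 1) - P.pts i)]
  linarith

lemma sum_sub_mul_add_le {ε : ℝ} (hP : P.diamLE ε) (δ : ℝ) :
    ∑ i ∈ Finset.range P.N, (P.pts (i + 1) - P.pts i) * (P.pts (i + 1) + δ) ≤
      (t ^ 2 - S ^ 2) / 2 + (t - S) * δ + (t - S) / 2 * ε := by
  have h := P.sum_le_sub (F := fun x => x ^ 2 / 2 + δ * x + ε * x / 2)
    (g := fun i => (P.pts (i + 1) - P.pts i) * (P.pts (i + 1) + δ))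
    fun i hi => by nlinarith [P.mono i hi, hP i hi]
  linarith

end TPartition

lemma iSup_edist_mul_eq {a b m : ℝ} {s : Set ℝ} (hab : a ≤ b) (hm : m ∈ s)
    (hs : ∀ x ∈ s, |x| ≤ m) :
    ⨆ x ∈ s, edist (b * x) (a * x) = ENNReal.ofReal ((b - a) * m) := by
  have hdist : ∀ x, edist (b * x) (a * x) = ENNReal.ofReal ((b - a) * |x|) := fun x => by
    rw [edist_dist, Real.dist_eq, ← sub_mul, abs_mul, abs_of_nonneg (sub_nonneg.2 hab)]
  simp_rw [hdist]
  refine le_antisymm (iSup₂_le fun x hx => ?_) ?_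
  · exact ENNReal.ofReal_le_ofReal (mul_le_mul_of_nonneg_left (hs x hx) (sub_nonneg.2 hab))
  · refine le_trans ?_ (le_iSup₂ (f := fun x _ => ENNReal.ofReal ((b - a) * |x|)) m hm)
    rw [abs_of_nonneg ((abs_nonneg m).trans (hs m hm))]

lemma ENNReal.iInf_pos_le_ofReal {g : ℝ → ℝ≥0∞} {a c : ℝ}
    (h : ∀ ε > 0, g ε ≤ ENNReal.ofReal (a + c * ε)) : ⨅ ε > 0, g ε ≤ ENNReal.ofReal a := by
  have hlim : Tendsto (fun ε => ENNReal.ofReal (a + c * ε)) (𝓝[>] 0) (𝓝 (ENNReal.ofReal a)) := by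
    refine ENNReal.tendsto_ofReal (tendsto_nhdsWithin_of_tendsto_nhds ?_)
    simpa using tendsto_const_nhds.add (tendsto_const_nhds.mul (tendsto_id (x := 𝓝 (0 : ℝ))))
  refine ge_of_tendsto hlim ?_
  filter_upwards [self_mem_nhdsWithin] with ε hε
  exact (iInf₂_le ε hε).trans (h ε hε)

section EmptyInterval

variable {E α : Type*} [NormedAddCommGroup E] [PseudoEMetricSpace α] (m : ℝ → E → α)
  (xbar : ℝ → E) (S : ℝ)

lemma fEtaEps_self (δ ε : ℝ) : fEtaEps m xbar δ ε S S = 0 := by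
  simp [fEtaEps]

lemma fEtaDelta_self (δ : ℝ) : fEtaDelta m xbar δ S S = 0 :=
  nonpos_iff_eq_zero.1 ((iInf₂_le 1 one_pos).trans (fEtaEps_self m xbar S δ 1).le)

lemma fEta_self : fEta m xbar S S = 0 :=
  nonpos_iff_eq_zero.1 ((iInf₂_le 1 one_pos).trans (fEtaDelta_self m xbar S 1).le)

end EmptyInterval

lemma etaSimple_eq {t : ℝ} (ht : 0 ≤ t) : etaSimple t = ENNReal.ofReal t := by
  have hsum : ∀ P : TPartition 0 t, ∑ i ∈ Finset.range P.N,
      ⨆ x ∈ Set.Icc (0 : ℝ) 1, edist (P.pts (i + 1) * x) (P.pts i * x) = ENNReal.ofReal t := by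
    intro P
    have hinc : ∀ i ∈ Finset.range P.N, 0 ≤ P.pts (i + 1) - P.pts i :=
      fun i hi => sub_nonneg.2 (P.mono i (Finset.mem_range.1 hi)).le
    rw [Finset.sum_congr rfl fun i hi => iSup_edist_mul_eq (s := Set.Icc 0 1)
      (sub_nonneg.1 (hinc i hi)) ⟨zero_le_one, le_rfl⟩
      fun x hx => (abs_of_nonneg hx.1).trans_le hx.2]
    simp_rw [mul_one]
    rw [← ENNReal.ofReal_sum_of_nonneg hinc]
    exact congrArg _ ((P.sum_range_sub_comp id).trans (sub_zero t))
  rcases ht.eq_or_lt with rfl | ht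
  · simp [etaSimple]
  · obtain ⟨P, -⟩ := TPartition.exists_diamLE (ε := 1) ht one_pos
    have : Nonempty (TPartition 0 t) := ⟨P⟩
    exact (iSup_congr hsum).trans iSup_const

section ProductAlongDiagonal

variable {S t : ℝ}

-- The supremum over `x ∈ x̄([tᵢ, tᵢ₊₁]) + δ𝔹 = [tᵢ - δ, tᵢ₊₁ + δ]` is attained at `tᵢ₊₁ + δ`.
lemma fSum_mul_eq (hS : 0 ≤ S) {δ : ℝ} (hδ : 0 ≤ δ) (P : TPartition S t) :
    fSum (fun t x => t * x) (fun s => s) δ P =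
      ENNReal.ofReal (∑ i ∈ Finset.range P.N,
        (P.pts (i + 1) - P.pts i) * (P.pts (i + 1) + δ)) := by
  have hpos : ∀ i ≤ P.N, 0 ≤ P.pts i := fun i hi => hS.trans (P.left_le_pts hi)
  rw [fSum, ENNReal.ofReal_sum_of_nonneg fun i hi => mul_nonneg
    (sub_nonneg.2 (P.mono i (Finset.mem_range.1 hi)).le)
    (add_nonneg (hpos _ (Finset.mem_range.1 hi)) hδ)]
  refine Finset.sum_congr rfl fun i hi => ?_
  have hi := Finset.mem_range.1 hi
  have hab := (P.mono i hi).le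
  have hset : (fun s : ℝ => s) '' Set.Icc (P.pts i) (P.pts (i + 1)) + Metric.closedBall 0 δ =
      Set.Icc (P.pts i - δ) (P.pts (i + 1) + δ) := by
    rw [Set.image_id', Real.closedBall_eq_Icc, zero_sub, zero_add,
      Set.Icc_add_Icc hab (neg_le_self hδ), sub_eq_add_neg]
  rw [hset]
  refine iSup_edist_mul_eq hab ⟨by linarith [hpos i hi.le], le_rfl⟩ fun x hx => abs_le.2 ⟨?_, hx.2⟩
  linarith [hx.1, hpos i hi.le]

lemma le_fEtaEps_mul (hS : 0 ≤ S) (hSt : S < t) {δ ε : ℝ} (hδ : 0 ≤ δ) (hε : 0 < ε) :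
    ENNReal.ofReal ((t ^ 2 - S ^ 2) / 2 + (t - S) * δ) ≤
      fEtaEps (fun t x => t * x) (fun s => s) δ ε S t := by
  obtain ⟨P, hP⟩ := TPartition.exists_diamLE hSt hε
  refine le_trans ?_ (le_iSup₂ (f := fun (P : TPartition S t) (_ : P.diamLE ε) =>
    fSum (fun t x => t * x) (fun s => s) δ P) P hP)
  rw [fSum_mul_eq hS hδ]
  exact ENNReal.ofReal_le_ofReal (P.le_sum_sub_mul_add δ)

lemma fEtaEps_mul_le (hS : 0 ≤ S) {δ ε : ℝ} (hδ : 0 ≤ δ) :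
    fEtaEps (fun t x => t * x) (fun s => s) δ ε S t ≤
      ENNReal.ofReal ((t ^ 2 - S ^ 2) / 2 + (t - S) * δ + (t - S) / 2 * ε) := by
  refine iSup₂_le fun P hP => ?_
  rw [fSum_mul_eq hS hδ]
  exact ENNReal.ofReal_le_ofReal (P.sum_sub_mul_add_le hP δ)

lemma fEtaDelta_mul_eq (hS : 0 ≤ S) (hSt : S < t) {δ : ℝ} (hδ : 0 ≤ δ) :
    fEtaDelta (fun t x => t * x) (fun s => s) δ S t =
      ENNReal.ofReal ((t ^ 2 - S ^ 2) / 2 + (t - S) * δ) :=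
  le_antisymm (ENNReal.iInf_pos_le_ofReal fun _ _ => fEtaEps_mul_le hS hδ)
    (le_iInf₂ fun _ hε => le_fEtaEps_mul hS hSt hδ hε)

lemma fEta_mul_eq (hS : 0 ≤ S) (hSt : S ≤ t) :
    fEta (fun t x => t * x) (fun s => s) S t = ENNReal.ofReal ((t ^ 2 - S ^ 2) / 2) := by
  rcases hSt.eq_or_lt with rfl | hSt
  · simp [fEta_self]
  refine le_antisymm (ENNReal.iInf_pos_le_ofReal fun δ hδ => (fEtaDelta_mul_eq hS hSt hδ.le).le)
    (le_iInf₂ fun δ hδ => ?_)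
  rw [fEtaDelta_mul_eq hS hSt hδ.le]
  exact ENNReal.ofReal_le_ofReal (le_add_of_nonneg_right (by nlinarith))

end ProductAlongDiagonal

/-- For `f(t,x) = t·x` on `[0,1] × ℝ` and `x̄(t) = t`:
(i) `η_simple(t) = t`; (ii) the cumulative variation function of `f(·,x)` along `x̄`
is `η(t) = t²/2`; and for every nontrivial `[s,t] ⊆ [0,1]`,
`(η_simple(t) − η_simple(s)) − (η(t) − η(s)) = (t−s)(1−(t+s)/2) > 0`. -/
theorem statement11 :
    (∀ t ∈ Set.Icc (0 : ℝ) 1, etaSimple t = ENNReal.ofReal t) ∧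
    (∀ t ∈ Set.Icc (0 : ℝ) 1,
      fEta (fun t x => t * x) (fun t => t) 0 t = ENNReal.ofReal (t ^ 2 / 2)) ∧
    ∀ s t : ℝ, 0 ≤ s → s < t → t ≤ 1 →
      (etaSimple t - etaSimple s) -
          (fEta (fun t x => t * x) (fun t => t) 0 t -
            fEta (fun t x => t * x) (fun t => t) 0 s) =
        ENNReal.ofReal ((t - s) * (1 - (t + s) / 2)) ∧
      0 < ENNReal.ofReal ((t - s) * (1 - (t + s) / 2)) := by
  have hη : ∀ t : ℝ, 0 ≤ t →
      fEta (fun t x => t * x) (fun t => t) 0 t = ENNReal.ofReal (t ^ 2 / 2) := fun t ht => by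
    simpa using fEta_mul_eq le_rfl ht
  refine ⟨fun t ht => etaSimple_eq ht.1, fun t ht => hη t ht.1, fun s t hs hst ht1 => ?_⟩
  have ht : 0 ≤ t := hs.trans hst.le
  have hgap : 0 < (t - s) * (1 - (t + s) / 2) := mul_pos (by linarith) (by linarith)
  rw [etaSimple_eq ht, etaSimple_eq hs, hη t ht, hη s hs, ← ENNReal.ofReal_sub _ hs,
    ← ENNReal.ofReal_sub _ (by positivity), ← ENNReal.ofReal_sub _ (by nlinarith)]
  exact ⟨congrArg _ (by ring), ENNReal.ofReal_pos.2 hgap⟩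
end
end
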